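/- Let s, t > 1 be odd integers with gcd(s, t) = 1, and let k, k' : ZMod s and ℓ, ℓ' : ZMod t. Then the graph D_{k,ℓ} ⊔ D_{k',ℓ'} on ZMod s × ZMod t contains a Hamiltonian path if and only if both the graph F_k ⊔ F_{k'} on ZMod s contains a Hamiltonian path and the graph F_ℓ ⊔ F_{ℓ'} on ZMod t contains a Hamiltonian path. (A pair of product near-one-factors is perfect if and only if both constituent pairs are perfect.) -/

import Mathlib

/-- For `n ≥ 1` and `k : ZMod n`, the graph `F k` on vertex set `ZMod n`
in which distinct vertices `i` and `j` are adjacent iff `i + j = k`. -/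
def F (n : ℕ) (k : ZMod n) : SimpleGraph (ZMod n) where
  Adj i j := i ≠ j ∧ i + j = k
  symm := ⟨fun i j ⟨h1, h2⟩ => ⟨h1.symm, by rwa [add_comm]⟩⟩
  loopless := ⟨fun i ⟨h, _⟩ => h rfl⟩

/-- For `s, t ≥ 1`, `k : ZMod s`, `ℓ : ZMod t`, the graph `D k ℓ` on vertex set
`ZMod s × ZMod t` in which distinct vertices `(i, j)` and `(i', j')` are
adjacent iff `i + i' = k` and `j + j' = ℓ`. -/
def D (s t : ℕ) (k : ZMod s) (ℓ : ZMod t) : SimpleGraph (ZMod s × ZMod t) where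
  Adj x y := x ≠ y ∧ x.1 + y.1 = k ∧ x.2 + y.2 = ℓ
  symm := ⟨fun x y ⟨h1, h2, h3⟩ =>
    ⟨h1.symm, by rwa [add_comm], by rwa [add_comm]⟩⟩
  loopless := ⟨fun x ⟨h, _⟩ => h rfl⟩

/-- A graph has a Hamiltonian path if some walk in it is a Hamiltonian path. -/
def HasHamiltonianPath {V : Type*} [DecidableEq V] (G : SimpleGraph V) : Prop :=
  ∃ (a b : V) (p : G.Walk a b), p.IsHamiltonian

/-!
Both graphs are instances of `sumGraph a ⊔ sumGraph b` on a finite abelian group `A` of odd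
order, where `sumGraph c` joins distinct `x, y` with `x + y = c`, and such a graph has a
Hamiltonian path iff `b - a` generates `A`. If it does, pick `c` with `2c = a` (possible as `|A|`
is odd) and walk `c, c + d, c - d, c + 2d, c - 2d, …` with `d = b - a`: consecutive sums alternate
between `b` and `a`. If it does not, then modulo `⟨b - a⟩` every edge has sum `a`, so along any
walk the class of the vertex alternates between two values, while the quotient has odd order
`> 1`, hence at least three elements. For `ZMod s × ZMod t` with `s, t` coprime, `(x, y)`
generates iff `x` and `y` do.
-/

open SimpleGraph

def sumGraph {A : Type*} [AddCommGroup A] (c : A) : SimpleGraph A where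
  Adj x y := x ≠ y ∧ x + y = c
  symm := ⟨fun x y ⟨hne, hsum⟩ => ⟨hne.symm, by rwa [add_comm]⟩⟩
  loopless := ⟨fun x ⟨hne, _⟩ => hne rfl⟩

lemma F_eq_sumGraph (n : ℕ) (k : ZMod n) : F n k = sumGraph k := rfl

lemma D_eq_sumGraph (s t : ℕ) (k : ZMod s) (ℓ : ZMod t) : D s t k ℓ = sumGraph (k, ℓ) := by
  ext x y
  simp only [D, sumGraph, Prod.ext_iff, Prod.fst_add, Prod.snd_add]

lemma hasHamiltonianPath_of_isChain {V : Type*} [DecidableEq V] {G : SimpleGraph V}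
    {l : List V} (hne : l ≠ []) (hchain : l.IsChain G.Adj) (hnodup : l.Nodup)
    (hmem : ∀ v, v ∈ l) : HasHamiltonianPath G :=
  ⟨_, _, Walk.ofSupport l hne hchain, fun v => by
    rw [Walk.support_ofSupport]; exact List.count_eq_one_of_mem hnodup (hmem v)⟩

lemma SimpleGraph.Walk.eq_or_eq_sub_of_mem_support {V A : Type*} [AddCommGroup A]
    {G : SimpleGraph V} {φ : V → A} {c : A} (hφ : ∀ x y, G.Adj x y → φ x + φ y = c)
    {x y : V} (p : G.Walk x y) {v : V} (hv : v ∈ p.support) : φ v = φ x ∨ φ v = c - φ x := by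
  induction p with
  | nil => left; rw [List.eq_of_mem_singleton hv]
  | @cons x z y hxz q ih =>
    have hz : φ z = c - φ x := eq_sub_of_add_eq' (hφ x z hxz)
    rcases List.mem_cons.mp hv with rfl | hv
    · exact Or.inl rfl
    · rcases ih hv with h | h
      · exact Or.inr (h.trans hz)
      · exact Or.inl (by rw [h, hz, sub_sub_cancel])

lemma card_le_two_of_hasHamiltonianPath {V A : Type*} [DecidableEq V] [AddCommGroup A]
    {G : SimpleGraph V} (hG : HasHamiltonianPath G) {φ : V → A} (hφs : Function.Surjective φ)
    {c : A} (hφ : ∀ x y, G.Adj x y → φ x + φ y = c) : Nat.card A ≤ 2 := by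
  obtain ⟨x, y, p, hp⟩ := hG
  have hsub : (Set.univ : Set A) ⊆ {φ x, c - φ x} := by
    intro u _
    obtain ⟨v, rfl⟩ := hφs u
    exact p.eq_or_eq_sub_of_mem_support hφ (hp.mem_support v)
  calc Nat.card A = (Set.univ : Set A).ncard := (Set.ncard_univ A).symm
    _ ≤ ({φ x, c - φ x} : Set A).ncard := Set.ncard_le_ncard hsub (Set.toFinite _)
    _ ≤ 2 := (Set.ncard_insert_le _ _).trans (by rw [Set.ncard_singleton])

def zigzag (i : ℕ) : ℤ := if i % 2 = 0 then -(i / 2 : ℕ) else (i / 2 : ℕ) + 1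

lemma zigzag_add_succ (i : ℕ) : zigzag i + zigzag (i + 1) = if i % 2 = 0 then 1 else 0 := by
  simp only [zigzag]; split <;> split <;> omega

lemma eq_of_zigzag_modEq {n i j : ℕ} (hn : Odd n) (hi : i < n) (hj : j < n)
    (h : zigzag i ≡ zigzag j [ZMOD n]) : i = j := by
  have hdiff : zigzag j - zigzag i = 0 := by
    refine Int.eq_zero_of_abs_lt_dvd h.dvd (abs_lt.mpr ?_)
    obtain ⟨m, rfl⟩ := hn
    simp only [zigzag]; split <;> split <;> omega
  simp only [zigzag] at hdiff; split at hdiff <;> split at hdiff <;> omega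

lemma hasHamiltonianPath_sumGraph_sup_of_addOrderOf {A : Type*} [AddCommGroup A] [Finite A]
    [DecidableEq A] (hodd : Odd (Nat.card A)) {a b : A}
    (hgen : addOrderOf (b - a) = Nat.card A) : HasHamiltonianPath (sumGraph a ⊔ sumGraph b) := by
  set n := Nat.card A
  obtain ⟨c, hc⟩ : ∃ c : A, 2 • c = a := (nsmulCoprime hodd.coprime_two_right).surjective a
  set v : ℕ → A := fun i => c + zigzag i • (b - a) with hv
  have hinj : ∀ i < n, ∀ j < n, v i = v j → i = j := fun i hi j hj h =>
    eq_of_zigzag_modEq hodd hi hj <| by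
      rw [← hgen, ← zsmul_eq_zsmul_iff_modEq]; exact add_left_cancel h
  have hsum (i : ℕ) : v i + v (i + 1) = if i % 2 = 0 then b else a := by
    have : v i + v (i + 1) = 2 • c + (zigzag i + zigzag (i + 1)) • (b - a) := by
      simp only [hv, add_smul, two_nsmul]; abel
    rw [this, zigzag_add_succ, hc]; split <;> simp
  have hsurj : Function.Surjective fun i : Fin n => v i :=
    (Function.Injective.bijective_of_nat_card_le
      (fun i j h => Fin.ext (hinj i i.2 j j.2 h)) (by rw [Nat.card_fin])).2
  refine hasHamiltonianPath_of_isChain (l := (List.range n).map v) ?_ ?_ ?_ ?_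
  · simpa using Nat.card_pos.ne'
  · refine List.isChain_map_of_isChain v (R := fun i j => j = i + 1 ∧ j < n) ?_ ?_
    · rintro i _ ⟨rfl, hlt⟩
      have hne : v i ≠ v (i + 1) := fun h => absurd (hinj i (by omega) (i + 1) hlt h) (by omega)
      have hvsum := hsum i
      split at hvsum
      · exact Or.inr ⟨hne, hvsum⟩
      · exact Or.inl ⟨hne, hvsum⟩
    · exact (List.isChain_range _ _).2 fun m hm => ⟨rfl, by omega⟩
  · exact List.nodup_range.map_on fun i hi j hj =>
      hinj i (List.mem_range.1 hi) j (List.mem_range.1 hj)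
  · intro w
    obtain ⟨i, rfl⟩ := hsurj w
    exact List.mem_map.2 ⟨i, List.mem_range.2 i.2, rfl⟩

lemma addOrderOf_sub_eq_card_of_hasHamiltonianPath {A : Type*} [AddCommGroup A] [Finite A]
    [DecidableEq A] (hodd : Odd (Nat.card A)) {a b : A}
    (h : HasHamiltonianPath (sumGraph a ⊔ sumGraph b)) : addOrderOf (b - a) = Nat.card A := by
  set H := AddSubgroup.zmultiples (b - a)
  have hba : (b : A ⧸ H) = a := (QuotientAddGroup.eq_iff_sub_mem).2 (AddSubgroup.mem_zmultiples _)
  have hindex_le : H.index ≤ 2 := by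
    refine card_le_two_of_hasHamiltonianPath h (QuotientAddGroup.mk'_surjective H)
      (c := (a : A ⧸ H)) fun x y hxy => ?_
    rcases hxy with ⟨-, hsum⟩ | ⟨-, hsum⟩
    · rw [← hsum]; rfl
    · rw [← hba, ← hsum]; rfl
  have hindex : H.index = 1 := by
    obtain ⟨m, hm⟩ := (hodd.of_dvd_nat H.index_dvd_card)
    omega
  rw [← Nat.card_zmultiples, ← H.card_mul_index, hindex, mul_one]

theorem hasHamiltonianPath_sumGraph_sup_iff {A : Type*} [AddCommGroup A] [Finite A]
    [DecidableEq A] (hodd : Odd (Nat.card A)) (a b : A) :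
    HasHamiltonianPath (sumGraph a ⊔ sumGraph b) ↔ addOrderOf (b - a) = Nat.card A :=
  ⟨addOrderOf_sub_eq_card_of_hasHamiltonianPath hodd,
    hasHamiltonianPath_sumGraph_sup_of_addOrderOf hodd⟩

lemma Prod.addOrderOf_eq_card_iff {G H : Type*} [AddGroup G] [AddGroup H] [Finite G] [Finite H]
    (hco : (Nat.card G).Coprime (Nat.card H)) (x : G) (y : H) :
    addOrderOf (x, y) = Nat.card (G × H) ↔
      addOrderOf x = Nat.card G ∧ addOrderOf y = Nat.card H := by
  rw [Prod.addOrderOf_mk, Nat.card_prod]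
  constructor
  · intro hlcm
    have hx := Nat.le_of_dvd Nat.card_pos (addOrderOf_dvd_natCard x)
    have hy := Nat.le_of_dvd Nat.card_pos (addOrderOf_dvd_natCard y)
    have hxy : Nat.card G * Nat.card H ≤ addOrderOf x * addOrderOf y :=
      hlcm ▸ Nat.le_of_dvd (Nat.mul_pos (addOrderOf_pos x) (addOrderOf_pos y))
        (Nat.lcm_dvd_mul _ _)
    have hG : 0 < Nat.card G := Nat.card_pos
    have hH : 0 < Nat.card H := Nat.card_pos
    constructor <;> nlinarith
  · rintro ⟨hx, hy⟩
    rw [hx, hy, hco.lcm_eq_mul]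

theorem stmt_12_general (s t : ℕ)
    (hsodd : Odd s) (htodd : Odd t) (hco : Nat.Coprime s t)
    (k k' : ZMod s) (ℓ ℓ' : ZMod t) :
    HasHamiltonianPath (D s t k ℓ ⊔ D s t k' ℓ') ↔
      HasHamiltonianPath (F s k ⊔ F s k') ∧ HasHamiltonianPath (F t ℓ ⊔ F t ℓ') := by
  have : NeZero s := ⟨hsodd.pos.ne'⟩
  have : NeZero t := ⟨htodd.pos.ne'⟩
  have hodd_s : Odd (Nat.card (ZMod s)) := by rwa [Nat.card_zmod]
  have hodd_t : Odd (Nat.card (ZMod t)) := by rwa [Nat.card_zmod]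
  have hodd_st : Odd (Nat.card (ZMod s × ZMod t)) := by
    rw [Nat.card_prod]; exact hodd_s.mul hodd_t
  have hco' : (Nat.card (ZMod s)).Coprime (Nat.card (ZMod t)) := by
    rwa [Nat.card_zmod, Nat.card_zmod]
  simp only [D_eq_sumGraph, F_eq_sumGraph]
  rw [hasHamiltonianPath_sumGraph_sup_iff hodd_st, hasHamiltonianPath_sumGraph_sup_iff hodd_s,
    hasHamiltonianPath_sumGraph_sup_iff hodd_t, Prod.mk_sub_mk, Prod.addOrderOf_eq_card_iff hco']

theorem stmt_12 (s t : ℕ) (hs : 1 < s) (ht : 1 < t)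
    (hsodd : Odd s) (htodd : Odd t) (hco : Nat.Coprime s t)
    (k k' : ZMod s) (ℓ ℓ' : ZMod t) :
    HasHamiltonianPath (D s t k ℓ ⊔ D s t k' ℓ') ↔
      HasHamiltonianPath (F s k ⊔ F s k') ∧ HasHamiltonianPath (F t ℓ ⊔ F t ℓ') :=
  stmt_12_general s t hsodd htodd hco k k' ℓ ℓ'
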